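/- Let (Δ_t)_{t≥0} be a sequence of reals with Δ_{t+1} = (1 − α_t) Δ_t + α_t β_t, where α_t ∈ [0,1], ∑_t α_t = ∞, and |β_t| ≤ γ |Δ_t| + c for constants γ ∈ [0,1) and c ≥ 0. Then limsup_{t→∞} |Δ_t| ≤ c/(1−γ); in particular the sequence (Δ_t) is bounded. -/

import Mathlib

/-!
Since `|Δ (t+1)| ≤ (1 - a t) |Δ t| + a t L` with `a t = α t (1 - γ)` and `L = c / (1 - γ)`,
the excess `(|Δ t| - L)⁺` contracts by the factor `1 - a t` at each step. The product of these
factors is at most `exp (-∑ a t)`, which tends to `0` because `∑ α t` diverges.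
-/

open Filter Topology Finset

theorem prod_one_sub_le_exp_neg_sum {ι : Type*} (s : Finset ι) {a : ι → ℝ}
    (ha : ∀ i ∈ s, a i ≤ 1) : ∏ i ∈ s, (1 - a i) ≤ Real.exp (-∑ i ∈ s, a i) := by
  rw [← sum_neg_distrib, Real.exp_sum]
  exact prod_le_prod (fun i hi => sub_nonneg.2 (ha i hi)) fun i _ => Real.one_sub_le_exp_neg _

theorem tendsto_prod_one_sub_of_tendsto_sum {a : ℕ → ℝ} (ha : ∀ t, a t ≤ 1)
    (hdiv : Tendsto (fun n => ∑ t ∈ range n, a t) atTop atTop) :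
    Tendsto (fun n => ∏ t ∈ range n, (1 - a t)) atTop (𝓝 0) :=
  squeeze_zero (fun _ => prod_nonneg fun t _ => sub_nonneg.2 (ha t))
    (fun _ => prod_one_sub_le_exp_neg_sum _ fun t _ => ha t)
    (Real.tendsto_exp_atBot.comp (tendsto_neg_atTop_atBot.comp hdiv))

theorem le_prod_one_sub_mul_of_le_one_sub_mul {e a : ℕ → ℝ} (ha : ∀ t, a t ≤ 1)
    (hstep : ∀ t, e (t + 1) ≤ (1 - a t) * e t) (n : ℕ) :
    e n ≤ (∏ t ∈ range n, (1 - a t)) * e 0 := by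
  induction n with
  | zero => simp
  | succ n ih =>
    calc e (n + 1) ≤ (1 - a n) * e n := hstep n
      _ ≤ (1 - a n) * ((∏ t ∈ range n, (1 - a t)) * e 0) :=
          mul_le_mul_of_nonneg_left ih (sub_nonneg.2 (ha n))
      _ = (∏ t ∈ range (n + 1), (1 - a t)) * e 0 := by rw [prod_range_succ]; ring

theorem tendsto_zero_of_le_one_sub_mul {e a : ℕ → ℝ} (he : ∀ t, 0 ≤ e t) (ha : ∀ t, a t ≤ 1)
    (hdiv : Tendsto (fun n => ∑ t ∈ range n, a t) atTop atTop)
    (hstep : ∀ t, e (t + 1) ≤ (1 - a t) * e t) : Tendsto e atTop (𝓝 0) := by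
  have hprod := (tendsto_prod_one_sub_of_tendsto_sum ha hdiv).mul_const (e 0)
  rw [zero_mul] at hprod
  exact squeeze_zero he (le_prod_one_sub_mul_of_le_one_sub_mul ha hstep) hprod

theorem tendsto_posPart_sub_of_le_one_sub_mul_add_mul {x a : ℕ → ℝ} {L : ℝ}
    (ha : ∀ t, a t ≤ 1) (hdiv : Tendsto (fun n => ∑ t ∈ range n, a t) atTop atTop)
    (hstep : ∀ t, x (t + 1) ≤ (1 - a t) * x t + a t * L) :
    Tendsto (fun t => (x t - L)⁺) atTop (𝓝 0) := by
  refine tendsto_zero_of_le_one_sub_mul (fun t => posPart_nonneg _) ha hdiv fun t => ?_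
  have hfac : 0 ≤ 1 - a t := sub_nonneg.2 (ha t)
  refine max_le ?_ (mul_nonneg hfac (posPart_nonneg _))
  calc x (t + 1) - L ≤ (1 - a t) * (x t - L) := by linarith [hstep t]
    _ ≤ (1 - a t) * (x t - L)⁺ := mul_le_mul_of_nonneg_left (le_posPart _) hfac

theorem limsup_le_of_tendsto_posPart_sub {ι : Type*} {l : Filter ι} [l.NeBot] {x : ι → ℝ}
    {L : ℝ} (hx : IsCoboundedUnder (· ≤ ·) l x) (h : Tendsto (fun t => (x t - L)⁺) l (𝓝 0)) :
    limsup x l ≤ L := by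
  have hlim : Tendsto (fun t => L + (x t - L)⁺) l (𝓝 L) := by
    simpa using tendsto_const_nhds.add h
  calc limsup x l ≤ limsup (fun t => L + (x t - L)⁺) l :=
        limsup_le_limsup (Eventually.of_forall fun t => by linarith [le_posPart (x t - L)]) hx
          hlim.isBoundedUnder_le
    _ = L := hlim.limsup_eq

theorem abs_one_sub_mul_add_mul_le {α β δ γ c : ℝ} (hα : α ∈ Set.Icc (0 : ℝ) 1)
    (hβ : |β| ≤ γ * |δ| + c) :
    |(1 - α) * δ + α * β| ≤ (1 - α * (1 - γ)) * |δ| + α * c :=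
  calc |(1 - α) * δ + α * β| ≤ (1 - α) * |δ| + α * |β| := by
        grw [abs_add_le, abs_mul, abs_mul, abs_of_nonneg (sub_nonneg.2 hα.2), abs_of_nonneg hα.1]
    _ ≤ (1 - α) * |δ| + α * (γ * |δ| + c) := by gcongr; exact hα.1
    _ = (1 - α * (1 - γ)) * |δ| + α * c := by ring

open Filter in
theorem sa_iterates_bounded_general (Δ α β : ℕ → ℝ) (γ c : ℝ)
    (hγ : γ ∈ Set.Ico (0:ℝ) 1)
    (hα : ∀ t, α t ∈ Set.Icc (0:ℝ) 1)
    (hαdiv : Tendsto (fun n => ∑ t ∈ Finset.range n, α t) atTop atTop)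
    (hβ : ∀ t, |β t| ≤ γ * |Δ t| + c)
    (hupd : ∀ t, Δ (t + 1) = (1 - α t) * Δ t + α t * β t) :
    Filter.limsup (fun t => |Δ t|) atTop ≤ c / (1 - γ) ∧ ∃ C, ∀ t, |Δ t| ≤ C := by
  have hγ' : 0 < 1 - γ := sub_pos.2 hγ.2
  have ha : ∀ t, α t * (1 - γ) ≤ 1 := fun t =>
    mul_le_one₀ (hα t).2 hγ'.le (by linarith [hγ.1])
  have hdiv : Tendsto (fun n => ∑ t ∈ range n, α t * (1 - γ)) atTop atTop := by
    simpa only [← sum_mul] using hαdiv.atTop_mul_const hγ'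
  have hstep : ∀ t,
      |Δ (t + 1)| ≤ (1 - α t * (1 - γ)) * |Δ t| + α t * (1 - γ) * (c / (1 - γ)) := by
    intro t
    rw [mul_assoc, mul_div_cancel₀ c hγ'.ne', hupd]
    exact abs_one_sub_mul_add_mul_le (hα t) (hβ t)
  have hexcess :=
    tendsto_posPart_sub_of_le_one_sub_mul_add_mul (x := fun t => |Δ t|) ha hdiv hstep
  refine ⟨limsup_le_of_tendsto_posPart_sub (isCoboundedUnder_le_of_le atTop fun t => abs_nonneg _)
    hexcess, ?_⟩
  obtain ⟨C, hC⟩ := hexcess.bddAbove_range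
  exact ⟨c / (1 - γ) + C, fun t => by
    linarith [le_posPart (|Δ t| - c / (1 - γ)), hC (Set.mem_range_self t)]⟩

open Filter in
/-- Deterministic stochastic-approximation boundedness lemma. -/
theorem sa_iterates_bounded (Δ α β : ℕ → ℝ) (γ c : ℝ)
    (hγ : γ ∈ Set.Ico (0:ℝ) 1) (hc : 0 ≤ c)
    (hα : ∀ t, α t ∈ Set.Icc (0:ℝ) 1)
    (hαdiv : Tendsto (fun n => ∑ t ∈ Finset.range n, α t) atTop atTop)
    (hβ : ∀ t, |β t| ≤ γ * |Δ t| + c)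
    (hupd : ∀ t, Δ (t + 1) = (1 - α t) * Δ t + α t * β t) :
    Filter.limsup (fun t => |Δ t|) atTop ≤ c / (1 - γ) ∧ ∃ C, ∀ t, |Δ t| ≤ C :=
  sa_iterates_bounded_general Δ α β γ c hγ hα hαdiv hβ hupd
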